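/- arXiv:2311.08875 — 3 statements merged into one kernel-verified Lean document; each statement's English description precedes it below -/
import Mathlib

section
/- Let f(x) ∈ ℚ[x] be irreducible with root α, and let h(x) ∈ ℚ[x]. Then f(h(x)) is reducible over ℚ if and only if h(x) − α is reducible over ℚ(α). -/
/-!
Capelli's lemma. Pick a root `β` of `h - α` in an algebraically closed field; then `β` is also a
root of `f ∘ h`, and `α = h(β) ∈ ℚ(β)`. A polynomial with a root `x` is irreducible exactly when
its degree is that of the minimal polynomial of `x`, and the tower law for `ℚ ⊆ ℚ(α) ⊆ ℚ(β)`
gives `deg_ℚ β = deg f · deg_{ℚ(α)} β`. Since `deg (f ∘ h) = deg f · deg h`, both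
irreducibility conditions become `deg_{ℚ(α)} β = deg h`.
-/

open Polynomial IntermediateField

theorem Polynomial.irreducible_iff_natDegree_minpoly_eq {F B : Type*} [Field F] [Ring B]
    [IsDomain B] [Algebra F B] {p : F[X]} {x : B} (hp : p ≠ 0) (hx : aeval x p = 0) :
    Irreducible p ↔ (minpoly F x).natDegree = p.natDegree := by
  refine ⟨fun hirr ↦ ?_, fun hdeg ↦ ?_⟩
  · rw [← minpoly.eq_of_irreducible hirr hx,
      natDegree_mul_C (inv_ne_zero (leadingCoeff_ne_zero.mpr hp))]
  · have hint : IsIntegral F x := IsAlgebraic.isIntegral ⟨p, hp, hx⟩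
    exact (associated_of_dvd_of_natDegree_le (minpoly.dvd F x hx) hp hdeg.ge).irreducible
      (minpoly.irreducible hint)

section

variable {F E : Type*} [Field F] [Field E] [Algebra F E]

theorem adjoin_simple_restrictScalars_eq_of_mem {α β : E} (hα : α ∈ F⟮β⟯) :
    (F⟮α⟯⟮β⟯).restrictScalars F = F⟮β⟯ := by
  rw [adjoin_simple_adjoin_simple]
  refine le_antisymm (adjoin_le_iff.mpr ?_) (adjoin.mono _ _ _ (by simp))
  rintro x (rfl | rfl)
  · exact hα
  · exact mem_adjoin_simple_self F x

theorem natDegree_minpoly_eq_mul_of_aeval_eq {β : E} (hβ : IsIntegral F β) (h : F[X]) :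
    (minpoly F β).natDegree =
      (minpoly F (aeval β h)).natDegree * (minpoly F⟮aeval β h⟯ β).natDegree := by
  have hmem : aeval β h ∈ F⟮β⟯ := algebra_adjoin_le_adjoin F {β} (aeval_mem_adjoin_singleton F β)
  have := adjoin.finiteDimensional hβ
  have hint : IsIntegral F (aeval β h) := isIntegral_iff.mp (.of_finite F (⟨_, hmem⟩ : F⟮β⟯))
  rw [← adjoin.finrank hβ, ← adjoin.finrank hint, ← adjoin.finrank hβ.tower_top,
    Module.finrank_mul_finrank, ← adjoin_simple_restrictScalars_eq_of_mem hmem]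
  rfl

theorem irreducible_comp_iff_irreducible_map_sub_C [IsAlgClosed E] {f : F[X]}
    (hf : Irreducible f) {α : E} (hα : aeval α f = 0) (h : F[X]) :
    Irreducible (f.comp h) ↔
      Irreducible (h.map (algebraMap F F⟮α⟯) - C (⟨α, mem_adjoin_simple_self F α⟩ : F⟮α⟯)) := by
  rcases Nat.eq_zero_or_pos h.natDegree with hh | hh
  · obtain ⟨c, rfl⟩ := natDegree_eq_zero.mp hh
    refine iff_of_false ?_ ?_
    · rw [comp_C]; exact not_irreducible_C _
    · rw [map_C, ← C_sub]; exact not_irreducible_C _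
  set g := h.map (algebraMap F F⟮α⟯) - C (⟨α, mem_adjoin_simple_self F α⟩ : F⟮α⟯)
  have hg : g.natDegree = h.natDegree := by rw [natDegree_sub_C, natDegree_map]
  have hg0 : g ≠ 0 := ne_zero_of_natDegree_gt (hg ▸ hh)
  obtain ⟨β, hβ⟩ := IsAlgClosed.exists_aeval_eq_zero E g
    (natDegree_pos_iff_degree_pos.mp (hg ▸ hh)).ne'
  have hβh : aeval β h = α := by
    rwa [map_sub, aeval_C, aeval_map_algebraMap, sub_eq_zero] at hβ
  have hfh : f.comp h ≠ 0 := ne_zero_of_natDegree_gt (n := 0) <| by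
    rw [natDegree_comp]; exact Nat.mul_pos hf.natDegree_pos hh
  have hβfh : aeval β (f.comp h) = 0 := by rw [aeval_comp, hβh, hα]
  have hdeg := natDegree_minpoly_eq_mul_of_aeval_eq (IsAlgebraic.isIntegral ⟨_, hfh, hβfh⟩) h
  subst hβh
  rw [irreducible_iff_natDegree_minpoly_eq hfh hβfh, irreducible_iff_natDegree_minpoly_eq hg0 hβ,
    hdeg, (irreducible_iff_natDegree_minpoly_eq hf.ne_zero hα).mp hf, natDegree_comp, hg]
  exact mul_right_inj' hf.natDegree_pos.ne'

end

theorem stmt_9 (f : Polynomial ℚ) (hirr : Irreducible f) (α : ℂ)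
    (hα : Polynomial.aeval α f = 0) (h : Polynomial ℚ) :
    ¬ Irreducible (f.comp h) ↔
      ¬ Irreducible (h.map (algebraMap ℚ ℚ⟮α⟯) -
        C (⟨α, IntermediateField.mem_adjoin_simple_self ℚ α⟩ : ℚ⟮α⟯)) :=
  not_congr (irreducible_comp_iff_irreducible_map_sub_C hirr hα h)
end

section
/- Let f(x) = x² − 11x − 43. Then f is irreducible modulo 2, and consequently f(x^p) is irreducible over ℚ for all primes p. -/
open Polynomial IntermediateField

lemma no_rat_root (p : ℕ) (hp : p.Prime) (q : ℚ) : q ^ p ≠ (-43 : ℚ) := by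
  intro h
  have hint : IsIntegral ℤ q := by
    refine ⟨X ^ p + C 43, monic_X_pow_add_C _ hp.ne_zero, ?_⟩
    simp [h]
  obtain ⟨m, rfl⟩ := IsIntegrallyClosed.isIntegral_iff.mp hint
  have hm : m ^ p = -43 := by
    have h2 : ((m ^ p : ℤ) : ℚ) = ((-43 : ℤ) : ℚ) := by push_cast; exact h
    exact Int.cast_injective h2
  have hna : m.natAbs ^ p = 43 := by
    have := congrArg Int.natAbs hm
    simpa [Int.natAbs_pow] using this
  have h43 : Nat.Prime 43 := by norm_num
  rcases (Nat.Prime.pow_eq_iff h43).mp hna with ⟨_, hp1⟩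
  exact hp.ne_one hp1

theorem stmt_17 :
    Irreducible (((X : Polynomial ℤ) ^ 2 - 11 * X - 43).map (Int.castRingHom (ZMod 2))) ∧
    ∀ p : ℕ, p.Prime →
      Irreducible ((((X : Polynomial ℤ) ^ 2 - 11 * X - 43).comp (X ^ p)).map
        (Int.castRingHom ℚ)) := by
  set fZ : ℤ[X] := X ^ 2 - 11 * X - 43 with hfZ
  have hfZm : fZ.Monic := by rw [hfZ]; monicity!
  have hdeg : fZ.natDegree = 2 := by rw [hfZ]; compute_degree!
  have part1 : Irreducible (fZ.map (Int.castRingHom (ZMod 2))) := by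
    have hm2 : (fZ.map (Int.castRingHom (ZMod 2))).Monic := hfZm.map _
    have hnat : (fZ.map (Int.castRingHom (ZMod 2))).natDegree = 2 := by
      rw [hfZm.natDegree_map, hdeg]
    rw [irreducible_iff_roots_eq_zero_of_degree_le_three (by rw [hnat]) (by rw [hnat]; norm_num)]
    refine Multiset.eq_zero_of_forall_notMem fun a ha => ?_
    rw [mem_roots hm2.ne_zero, IsRoot, eval_map, hfZ] at ha
    simp only [eval₂_sub, eval₂_mul, eval₂_pow, eval₂_X, eval₂_ofNat] at ha
    revert ha
    revert a; decide
  refine ⟨part1, fun p hp => ?_⟩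
  set fQ : ℚ[X] := fZ.map (Int.castRingHom ℚ) with hfQ
  have hfQm : fQ.Monic := hfZm.map _
  have hfQdeg : fQ.natDegree = 2 := by rw [hfQ, hfZm.natDegree_map, hdeg]
  have hfQirr : Irreducible fQ := by
    have hZ : Irreducible fZ := hfZm.irreducible_of_irreducible_map _ _ part1
    have := (hfZm.irreducible_iff_irreducible_map_fraction_map (K := ℚ)).mp hZ
    rwa [hfQ, ← algebraMap_int_eq]
  have hcoeff : fQ.coeff 0 = -43 := by
    rw [hfQ, coeff_map, hfZ]
    simp
  have hmapcomp : (fZ.comp (X ^ p)).map (Int.castRingHom ℚ) = fQ.comp (X ^ p) := by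
    rw [Polynomial.map_comp, Polynomial.map_pow, map_X]
  rw [hmapcomp]
  refine Polynomial.irreducible_comp hfQm (monic_X_pow p) hfQirr ?_
  intro E _ _ x hx
  have hxint : IsIntegral ℚ x := by
    by_contra h
    exact hfQm.ne_zero (hx ▸ minpoly.eq_zero h)
  simp only [Polynomial.map_pow, map_X]
  apply X_pow_sub_C_irreducible_of_prime hp
  intro b hb
  letI : Algebra ℚ ↥ℚ⟮x⟯ := ℚ⟮x⟯.algebra'
  refine no_rat_root p hp (Algebra.norm ℚ b) ?_
  rw [← map_pow, hb, ← adjoin.powerBasis_gen hxint,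
      Algebra.PowerBasis.norm_gen_eq_coeff_zero_minpoly]
  rw [adjoin.powerBasis_gen, adjoin.powerBasis_dim, minpoly_gen, hx, hfQdeg, hcoeff]
  norm_num
end

section
/- Let f(x) ∈ ℤ[x] be monic irreducible over ℚ with |f(0)| ≥ 2 and f(0) squarefree. Then f(x^p) is irreducible over ℚ for every prime p. -/
open Polynomial IntermediateField

theorem stmt_18 (f : Polynomial ℤ) (hmonic : f.Monic)
    (hirr : Irreducible (f.map (Int.castRingHom ℚ)))
    (habs : 2 ≤ |f.coeff 0|) (hsq : Squarefree (f.coeff 0))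
    (p : ℕ) (hp : p.Prime) :
    Irreducible ((f.comp (X ^ p)).map (Int.castRingHom ℚ)) := by
  have hF : (f.map (Int.castRingHom ℚ)).Monic := hmonic.map _
  rw [Polynomial.map_comp, Polynomial.map_pow, Polynomial.map_X]
  apply Polynomial.irreducible_comp hF (monic_X_pow p) hirr
  intro E _ _ x hx
  rw [Polynomial.map_pow, Polynomial.map_X]
  have hxi : IsIntegral ℚ x := by
    by_contra h
    exact hF.ne_zero (hx ▸ minpoly.eq_zero h)
  letI : Algebra ℚ ↥(ℚ⟮x⟯) := IntermediateField.algebra' ℚ⟮x⟯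
  apply X_pow_sub_C_irreducible_of_prime hp
  intro b hb
  have key := Algebra.PowerBasis.norm_gen_eq_coeff_zero_minpoly
    (IntermediateField.adjoin.powerBasis hxi)
  rw [IntermediateField.adjoin.powerBasis_gen, IntermediateField.minpoly_gen, hx, coeff_map,
    ← hb, map_pow] at key
  set d := (IntermediateField.adjoin.powerBasis hxi).dim with hd
  set M : ℤ := (-1) ^ d * f.coeff 0 with hM
  obtain ⟨N, hN⟩ : ∃ N : ℚ, N ^ p = (M : ℤ) := ⟨_, by rw [key, hM, eq_intCast]; push_cast; ring⟩
  have hNint : IsIntegral ℤ N := by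
    refine ⟨X ^ p - C M, monic_X_pow_sub_C _ hp.ne_zero, ?_⟩
    simp only [eval₂_sub, eval₂_pow, eval₂_X, eval₂_C, hN]
    simp
  obtain ⟨m, hm⟩ := IsIntegrallyClosed.isIntegral_iff.mp hNint
  rw [algebraMap_int_eq, eq_intCast] at hm
  have hmp : m ^ p = M := by
    have h2 := hN
    rw [← hm] at h2
    exact_mod_cast h2
  have hsign : ((-1 : ℤ)) ^ d * (-1) ^ d = 1 := by
    rw [← pow_add, ← two_mul, pow_mul]
    norm_num
  have hc : f.coeff 0 = (-1) ^ d * M := by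
    rw [hM, ← mul_assoc, hsign, one_mul]
  have hdvd : m * m ∣ f.coeff 0 := by
    rw [hc]
    exact Dvd.dvd.mul_left (by
      calc m * m = m ^ 2 := (sq m).symm
      _ ∣ m ^ p := pow_dvd_pow m hp.two_le
      _ = M := hmp) _
  have hu := hsq m hdvd
  have habsM : 2 ≤ |M| := by
    rw [hM, abs_mul, abs_pow, abs_neg, abs_one, one_pow, one_mul]
    exact habs
  rcases Int.isUnit_iff.mp hu with rfl | rfl <;>
    simp [← hmp, abs_pow] at habsM
end
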